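/- Let G = (V,w) and G' = (V,w') be weighted graphs on the same vertex set V with |V| = n, and suppose G' is an (α,β)-approximation to cut queries in G with α ≥ 0 and β ≥ 0. Then for every binary tree T with leaf set V: (1−α)·ω_G(T) − 2βn² ≤ ω_{G'}(T) ≤ (1+α)·ω_G(T) + 2βn². -/

import Mathlib

/-!
Grouping the pairs `{u, v}` by the node where they are separated, `2 ω(T)` is a nonnegative
combination of cut values: `Σ_x w({x}, V∖{x})` plus, for every internal node with children `L`
and `R`, the terms `|R| w(L, V∖L) + |L| w(R, V∖R)`. Applying the cut approximation to each term,
the additive errors add up to at most `β (n + Σ 2|L||R|) = β n²`.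
-/

open Finset

inductive BTree (V : Type) : Type
  | leaf : V → BTree V
  | node : BTree V → BTree V → BTree V
  deriving DecidableEq

namespace BTree

variable {V : Type} [DecidableEq V]

def leavesList : BTree V → List V
  | leaf x => [x]
  | node L R => L.leavesList ++ R.leavesList

def leaves (T : BTree V) : Finset V :=
  T.leavesList.toFinset

def cluster : BTree V → V → V → Finset V
  | leaf x, _, _ => {x}
  | node L R, u, v =>
    if u ∈ L.leaves ∧ v ∈ L.leaves then L.cluster u v
    else if u ∈ R.leaves ∧ v ∈ R.leaves then R.cluster u v
    else (node L R).leaves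

end BTree

section
variable {V : Type} [Fintype V] [DecidableEq V]

def IsHC (T : BTree V) : Prop :=
  T.leavesList.Nodup ∧ T.leaves = Finset.univ

def IsWeight (w : V → V → ℝ) : Prop :=
  (∀ u v, 0 ≤ w u v) ∧ (∀ u v, w u v = w v u) ∧ ∀ u, w u u = 0

noncomputable def cost (w : V → V → ℝ) (T : BTree V) : ℝ :=
  (1 / 2) * ∑ u : V, ∑ v : V, w u v * ((T.cluster u v).card : ℝ)

noncomputable def optCost (w : V → V → ℝ) : ℝ :=
  sInf {c : ℝ | ∃ T : BTree V, IsHC T ∧ cost w T = c}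

noncomputable def graphDist (w w' : V → V → ℝ) : ℝ :=
  (1 / 2) * ∑ u : V, ∑ v : V, |w u v - w' u v|

noncomputable def cutW (w : V → V → ℝ) (A B : Finset V) : ℝ :=
  ∑ a ∈ A, ∑ b ∈ B, w a b

def IsEdgeDP (A : (V → V → ℝ) → PMF (BTree V)) (ε : ℝ) : Prop :=
  ∀ w w' : V → V → ℝ, IsWeight w → IsWeight w' → graphDist w w' ≤ 1 →
    ∀ S : Set (BTree V),
      (A w').toOuterMeasure S ≤ ENNReal.ofReal (Real.exp ε) * (A w).toOuterMeasure S

end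

/-- `G' = (V,w')` is an `(α,β)`-approximation to cut queries in `G = (V,w)`. -/
def CutApprox {V : Type} [Fintype V] [DecidableEq V] (w w' : V → V → ℝ) (α β : ℝ) : Prop :=
  ∀ S : Finset V,
    (1 - α) * cutW w S Sᶜ
        - β * ((min S.card (Fintype.card V - S.card) : ℕ) : ℝ) ≤ cutW w' S Sᶜ ∧
    cutW w' S Sᶜ ≤ (1 + α) * cutW w S Sᶜ
        + β * ((min S.card (Fintype.card V - S.card) : ℕ) : ℝ)

namespace BTree

variable {V : Type} [DecidableEq V]

theorem leaves_leaf (x : V) : (leaf x).leaves = {x} := rfl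

theorem leaves_node (L R : BTree V) : (node L R).leaves = L.leaves ∪ R.leaves := by
  simp [leaves, leavesList]

theorem nodup_leavesList_node {L R : BTree V} :
    (node L R).leavesList.Nodup ↔
      L.leavesList.Nodup ∧ R.leavesList.Nodup ∧ Disjoint L.leaves R.leaves := by
  simp only [leavesList, leaves, List.nodup_append, List.disjoint_toFinset_iff_disjoint,
    List.Disjoint]
  exact and_congr_right fun _ => and_congr_right fun _ =>
    ⟨fun h a ha hb => h a ha a hb rfl, fun h a ha b hb hab => h ha (hab ▸ hb)⟩

theorem cluster_node_of_mem_left {L R : BTree V} {u v : V} (hu : u ∈ L.leaves)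
    (hv : v ∈ L.leaves) : (node L R).cluster u v = L.cluster u v := by
  rw [cluster, if_pos ⟨hu, hv⟩]

theorem cluster_node_of_mem_right {L R : BTree V} (hLR : Disjoint L.leaves R.leaves) {u v : V}
    (hu : u ∈ R.leaves) (hv : v ∈ R.leaves) : (node L R).cluster u v = R.cluster u v := by
  rw [cluster, if_neg fun h => disjoint_right.mp hLR hu h.1, if_pos ⟨hu, hv⟩]

theorem cluster_node_of_not_mem {L R : BTree V} {u v : V}
    (hL : ¬(u ∈ L.leaves ∧ v ∈ L.leaves)) (hR : ¬(u ∈ R.leaves ∧ v ∈ R.leaves)) :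
    (node L R).cluster u v = (node L R).leaves := by
  rw [cluster, if_neg hL, if_neg hR]

end BTree

open BTree

section Cuts

variable {V : Type} {w : V → V → ℝ}

theorem cutW_comm (hsymm : ∀ u v, w u v = w v u) (A B : Finset V) :
    cutW w A B = cutW w B A := by
  rw [cutW, cutW, sum_comm]
  exact sum_congr rfl fun b _ => sum_congr rfl fun a _ => hsymm a b

variable [DecidableEq V]

theorem cutW_union_left {A B : Finset V} (h : Disjoint A B) (C : Finset V) :
    cutW w (A ∪ B) C = cutW w A C + cutW w B C :=
  sum_union h

theorem cutW_union_right (A : Finset V) {B C : Finset V} (h : Disjoint B C) :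
    cutW w A (B ∪ C) = cutW w A B + cutW w A C := by
  simp only [cutW, sum_union h, sum_add_distrib]

variable [Fintype V]

theorem cutW_compl (A : Finset V) : cutW w A Aᶜ = cutW w A univ - cutW w A A := by
  rw [← union_compl A, cutW_union_right A disjoint_compl_right]
  ring

theorem cutW_union_compl (hsymm : ∀ u v, w u v = w v u) {A B : Finset V} (h : Disjoint A B) :
    cutW w (A ∪ B) (A ∪ B)ᶜ = cutW w A Aᶜ + cutW w B Bᶜ - 2 * cutW w A B := by
  rw [cutW_compl, cutW_compl A, cutW_compl B, cutW_union_left h, cutW_union_left h,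
    cutW_union_right A h, cutW_union_right B h, cutW_comm hsymm B A]
  ring

theorem CutApprox.abs_sub_le {w' : V → V → ℝ} {α β : ℝ} (happrox : CutApprox w w' α β)
    (hβ : 0 ≤ β) (S : Finset V) :
    |cutW w' S Sᶜ - cutW w S Sᶜ| ≤ α * cutW w S Sᶜ + β * #S := by
  have hmin : β * ((min #S (Fintype.card V - #S) : ℕ) : ℝ) ≤ β * #S := by
    gcongr
    exact min_le_left _ _
  rw [abs_sub_le_iff]
  constructor <;> linarith [happrox S]

end Cuts

section Expansion

variable {V : Type} [DecidableEq V]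

noncomputable def innerCost (w : V → V → ℝ) (T : BTree V) : ℝ :=
  ∑ u ∈ T.leaves, ∑ v ∈ T.leaves, w u v * #(T.cluster u v)

theorem innerCost_node {w : V → V → ℝ} (hsymm : ∀ u v, w u v = w v u) {L R : BTree V}
    (hLR : Disjoint L.leaves R.leaves) :
    innerCost w (node L R) = innerCost w L + innerCost w R
      + 2 * (#L.leaves + #R.leaves) * cutW w L.leaves R.leaves := by
  have hcross : ∀ u ∈ L.leaves, ∀ v ∈ R.leaves,
      (node L R).cluster u v = (node L R).leaves ∧ (node L R).cluster v u = (node L R).leaves :=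
    fun u hu v hv =>
      ⟨cluster_node_of_not_mem (fun h => disjoint_left.mp hLR h.2 hv)
          (fun h => disjoint_left.mp hLR hu h.1),
        cluster_node_of_not_mem (fun h => disjoint_left.mp hLR h.1 hv)
          (fun h => disjoint_left.mp hLR hu h.2)⟩
  have hcard : (#(node L R).leaves : ℝ) = #L.leaves + #R.leaves := by
    rw [leaves_node, card_union_of_disjoint hLR, Nat.cast_add]
  have hLL : ∑ u ∈ L.leaves, ∑ v ∈ L.leaves, w u v * #((node L R).cluster u v) =
      innerCost w L :=
    sum_congr rfl fun u hu => sum_congr rfl fun v hv => by rw [cluster_node_of_mem_left hu hv]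
  have hRR : ∑ u ∈ R.leaves, ∑ v ∈ R.leaves, w u v * #((node L R).cluster u v) =
      innerCost w R :=
    sum_congr rfl fun u hu => sum_congr rfl fun v hv => by
      rw [cluster_node_of_mem_right hLR hu hv]
  have hLR' : ∑ u ∈ L.leaves, ∑ v ∈ R.leaves, w u v * #((node L R).cluster u v) =
      (#L.leaves + #R.leaves) * cutW w L.leaves R.leaves := by
    rw [cutW, mul_sum]
    refine sum_congr rfl fun u hu => ?_
    rw [mul_sum]
    exact sum_congr rfl fun v hv => by rw [(hcross u hu v hv).1, hcard, mul_comm]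
  have hRL : ∑ u ∈ R.leaves, ∑ v ∈ L.leaves, w u v * #((node L R).cluster u v) =
      (#L.leaves + #R.leaves) * cutW w L.leaves R.leaves := by
    rw [cutW_comm hsymm, cutW, mul_sum]
    refine sum_congr rfl fun u hu => ?_
    rw [mul_sum]
    exact sum_congr rfl fun v hv => by rw [(hcross v hv u hu).2, hcard, mul_comm]
  rw [innerCost, leaves_node]
  simp only [sum_union hLR, sum_add_distrib]
  rw [hLL, hRR, hLR', hRL]
  ring

variable [Fintype V]

noncomputable def cutExpansion (w : V → V → ℝ) : BTree V → ℝ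
  | .leaf x => cutW w {x} {x}ᶜ
  | .node L R => cutExpansion w L + cutExpansion w R + #R.leaves * cutW w L.leaves L.leavesᶜ
      + #L.leaves * cutW w R.leaves R.leavesᶜ

variable {w : V → V → ℝ}

theorem innerCost_add_card_mul_cutW (hsymm : ∀ u v, w u v = w v u) (hdiag : ∀ u, w u u = 0)
    (T : BTree V) (hT : T.leavesList.Nodup) :
    innerCost w T + #T.leaves * cutW w T.leaves T.leavesᶜ = cutExpansion w T := by
  induction T with
  | leaf x => simp [innerCost, cutExpansion, leaves_leaf, cluster, hdiag]
  | node L R ihL ihR =>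
    obtain ⟨hL, hR, hLR⟩ := nodup_leavesList_node.mp hT
    rw [innerCost_node hsymm hLR, leaves_node, cutW_union_compl hsymm hLR,
      card_union_of_disjoint hLR, cutExpansion, ← ihL hL, ← ihR hR]
    push_cast
    ring

theorem two_mul_cost_eq_cutExpansion (hsymm : ∀ u v, w u v = w v u) (hdiag : ∀ u, w u u = 0)
    {T : BTree V} (hT : IsHC T) : 2 * cost w T = cutExpansion w T := by
  rw [← innerCost_add_card_mul_cutW hsymm hdiag T hT.1, hT.2, compl_univ, cost, innerCost, hT.2]
  simp [cutW]

/-- The error bound is in terms of `T.leavesList.length`, which dominates `#T.leaves` and is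
additive over nodes whether or not the leaves are distinct. -/
theorem CutApprox.abs_sub_cutExpansion_le {w' : V → V → ℝ} {α β : ℝ}
    (happrox : CutApprox w w' α β) (hβ : 0 ≤ β) (T : BTree V) :
    |cutExpansion w' T - cutExpansion w T| ≤
      α * cutExpansion w T + β * T.leavesList.length ^ 2 := by
  induction T with
  | leaf x => simpa [cutExpansion, leavesList] using happrox.abs_sub_le hβ {x}
  | node L R ihL ihR =>
    have hcut (A : BTree V) (c : ℝ) (hc : 0 ≤ c) :
        |c * cutW w' A.leaves A.leavesᶜ - c * cutW w A.leaves A.leavesᶜ| ≤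
          α * (c * cutW w A.leaves A.leavesᶜ) + β * (c * #A.leaves) := by
      rw [← mul_sub, abs_mul, abs_of_nonneg hc]
      linarith [mul_le_mul_of_nonneg_left (happrox.abs_sub_le hβ A.leaves) hc]
    have hL := hcut L #R.leaves (Nat.cast_nonneg _)
    have hR := hcut R #L.leaves (Nat.cast_nonneg _)
    have hsize :
        β * (#R.leaves * #L.leaves) ≤ β * (R.leavesList.length * L.leavesList.length) := by
      gcongr <;> exact_mod_cast List.toFinset_card_le _
    rw [abs_le] at ihL ihR hL hR ⊢
    simp only [cutExpansion, leavesList, List.length_append]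
    push_cast
    constructor <;> linarith [ihL.1, ihL.2, ihR.1, ihR.2, hL.1, hL.2, hR.1, hR.2]

end Expansion

theorem cost_of_cut_approx_general (V : Type) [Fintype V] [DecidableEq V] (n : ℕ)
    (hcard : Fintype.card V = n) (w w' : V → V → ℝ) (hw : IsWeight w) (hw' : IsWeight w')
    (α β : ℝ) (hβ : 0 ≤ β) (happrox : CutApprox w w' α β)
    (T : BTree V) (hT : IsHC T) :
    (1 - α) * cost w T - 2 * β * (n : ℝ) ^ 2 ≤ cost w' T ∧
    cost w' T ≤ (1 + α) * cost w T + 2 * β * (n : ℝ) ^ 2 := by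
  have hlength : T.leavesList.length = n := by
    rw [← List.toFinset_card_of_nodup hT.1, ← leaves, hT.2, card_univ, hcard]
  have h := happrox.abs_sub_cutExpansion_le hβ T
  rw [← two_mul_cost_eq_cutExpansion hw.2.1 hw.2.2 hT,
    ← two_mul_cost_eq_cutExpansion hw'.2.1 hw'.2.2 hT, hlength, abs_sub_le_iff] at h
  have hβn : 0 ≤ β * (n : ℝ) ^ 2 := by positivity
  constructor <;> linarith [h.1, h.2]

/-- If `G'` is an `(α,β)`-approximation to cut queries in `G` (with
`α, β ≥ 0`), then for every binary tree `T` with leaf set `V`: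
`(1−α)·ω_G(T) − 2βn² ≤ ω_{G'}(T) ≤ (1+α)·ω_G(T) + 2βn²`. -/
theorem cost_of_cut_approx (V : Type) [Fintype V] [DecidableEq V] (n : ℕ)
    (hcard : Fintype.card V = n) (w w' : V → V → ℝ) (hw : IsWeight w) (hw' : IsWeight w')
    (α β : ℝ) (hα : 0 ≤ α) (hβ : 0 ≤ β) (happrox : CutApprox w w' α β)
    (T : BTree V) (hT : IsHC T) :
    (1 - α) * cost w T - 2 * β * (n : ℝ) ^ 2 ≤ cost w' T ∧
    cost w' T ≤ (1 + α) * cost w T + 2 * β * (n : ℝ) ^ 2 :=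
  cost_of_cut_approx_general V n hcard w w' hw hw' α β hβ happrox T hT
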